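/- Eigenvalue ε of the full one-loop stability matrix: if (λ, y) is a fixed point (β^λ(λ, y) = 0 and β^y(y) = 0), then (d/dt) β^λ((1 + t) λ, (1 + t/2) y) evaluated at t = 0 equals ε λ_{ijkl} for all indices i, j, k, l, and (d/dt) β^y_i((1 + t/2) y) evaluated at t = 0 equals (ε/2) y_i for all i; that is, the vector (λ, (1/2) y) of couplings is an eigenvector of the full one-loop stability matrix at the fixed point with eigenvalue ε. -/
import Mathlib


open Matrix

noncomputable section

/-- `Z_{ij} = Tr(y_i y_j)` for real (3d Majorana, α = 1) Yukawa couplings. -/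
def Zm {Ns Nf : ℕ} (y : Fin Ns → Matrix (Fin Nf) (Fin Nf) ℝ) (i j : Fin Ns) : ℝ :=
  Matrix.trace (y i * y j)

/-- `X_{ijkl} = (1/8) Σ_σ Tr(y_{σ(i)} y_{σ(j)} y_{σ(k)} y_{σ(l)})`,
summing over all 24 permutations of the index list `(i,j,k,l)`. -/
def Xm {Ns Nf : ℕ} (y : Fin Ns → Matrix (Fin Nf) (Fin Nf) ℝ) (i j k l : Fin Ns) : ℝ :=
  (1 / 8) * ∑ σ : Equiv.Perm (Fin 4),
    Matrix.trace (y (![i, j, k, l] (σ 0)) * y (![i, j, k, l] (σ 1)) *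
      (y (![i, j, k, l] (σ 2)) * y (![i, j, k, l] (σ 3))))

/-- Full permutation symmetry of the quartic coupling tensor. -/
def FullySymm {Ns : ℕ} (lam : Fin Ns → Fin Ns → Fin Ns → Fin Ns → ℝ) : Prop :=
  ∀ i j k l, lam i j k l = lam j i k l ∧ lam i j k l = lam i k j l ∧
    lam i j k l = lam i j l k

/-- One-loop quartic beta function for 3d Majorana fermions (α = 1). -/
def betaLamM {Ns Nf : ℕ} (ε : ℝ) (lam : Fin Ns → Fin Ns → Fin Ns → Fin Ns → ℝ)
    (y : Fin Ns → Matrix (Fin Nf) (Fin Nf) ℝ) (i j k l : Fin Ns) : ℝ :=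
  -ε * lam i j k l
    + ∑ m, ∑ n, (lam i j m n * lam m n k l + lam i k m n * lam m n j l
        + lam i l m n * lam m n j k)
    - 4 * Xm y i j k l
    + (1 / 2) * ∑ m, (Zm y i m * lam m j k l + Zm y j m * lam i m k l
        + Zm y k m * lam i j m l + Zm y l m * lam i j k m)

/-- One-loop Yukawa beta function for 3d Majorana fermions (α = 1). -/
def betaYM {Ns Nf : ℕ} (ε : ℝ) (y : Fin Ns → Matrix (Fin Nf) (Fin Nf) ℝ) (i : Fin Ns) :
    Matrix (Fin Nf) (Fin Nf) ℝ :=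
  (-(1 / 2) * ε) • y i
    + (1 / 2 : ℝ) • ∑ j, (y j * y j * y i + y i * (y j * y j) + (4 : ℝ) • (y j * y i * y j))
    + (1 / 2 : ℝ) • ∑ j, (Zm y i j • y j)

lemma derivPoly (c0 c1 c2 c3 c4 : ℝ) :
    deriv (fun t : ℝ => c0 + c1 * t + c2 * t^2 + c3 * t^3 + c4 * t^4) 0 = c1 := by
  have h : HasDerivAt (fun t : ℝ => c0 + c1 * t + c2 * t^2 + c3 * t^3 + c4 * t^4)
      (0 + c1 * 1 + c2 * ((2:ℕ) * 0 ^ 1) + c3 * ((3:ℕ) * 0 ^ 2) + c4 * ((4:ℕ) * 0 ^ 3)) 0 :=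
    ((((hasDerivAt_const 0 c0).add ((hasDerivAt_id 0).const_mul c1)).add
      ((hasDerivAt_pow 2 0).const_mul c2)).add ((hasDerivAt_pow 3 0).const_mul c3)).add
      ((hasDerivAt_pow 4 0).const_mul c4)
  simpa using h.deriv

lemma Zm_smul {Ns Nf : ℕ} (s : ℝ) (y : Fin Ns → Matrix (Fin Nf) (Fin Nf) ℝ) (i j : Fin Ns) :
    Zm (fun m => s • y m) i j = s ^ 2 * Zm y i j := by
  simp only [Zm, smul_mul_assoc, mul_smul_comm, smul_smul, trace_smul, smul_eq_mul]; ring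

lemma Xm_smul {Ns Nf : ℕ} (s : ℝ) (y : Fin Ns → Matrix (Fin Nf) (Fin Nf) ℝ)
    (i j k l : Fin Ns) : Xm (fun m => s • y m) i j k l = s ^ 4 * Xm y i j k l := by
  have key : ∀ A B C D : Matrix (Fin Nf) (Fin Nf) ℝ,
      trace ((s • A) * (s • B) * ((s • C) * (s • D))) = s ^ 4 * trace (A * B * (C * D)) := by
    intro A B C D
    simp only [smul_mul_assoc, mul_smul_comm, smul_smul, trace_smul, smul_eq_mul]; ring
  simp only [Xm, key, ← Finset.mul_sum]
  ring

/-- Eigenvalue `ε` of the full one-loop stability matrix: at a fixed point `(λ, y)`, the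
coupling vector `(λ, y/2)` is an eigenvector of the full stability matrix with
eigenvalue `ε`. -/
theorem full_stability_matrix_eigenvector_eps {Ns Nf : ℕ} (hNs : 1 ≤ Ns) (hNf : 1 ≤ Nf)
    (ε : ℝ) (lam : Fin Ns → Fin Ns → Fin Ns → Fin Ns → ℝ)
    (y : Fin Ns → Matrix (Fin Nf) (Fin Nf) ℝ)
    (hsym : FullySymm lam) (hy : ∀ i, (y i)ᵀ = y i)
    (hfpl : ∀ i j k l, betaLamM ε lam y i j k l = 0)
    (hfpy : ∀ i, betaYM ε y i = 0) :
    (∀ i j k l, deriv (fun t : ℝ =>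
        betaLamM ε (fun p q r s => (1 + t) * lam p q r s)
          (fun m => (1 + t / 2) • y m) i j k l) 0 = ε * lam i j k l)
    ∧ (∀ i a b, deriv (fun t : ℝ =>
        betaYM ε (fun m => (1 + t / 2) • y m) i a b) 0 = (ε / 2) * y i a b) := by
  constructor
  · intro i j k l
    set L := lam i j k l with hL
    set Q := ∑ m, ∑ n, (lam i j m n * lam m n k l + lam i k m n * lam m n j l
        + lam i l m n * lam m n j k) with hQ
    set X := Xm y i j k l with hX
    set W := ∑ m, (Zm y i m * lam m j k l + Zm y j m * lam i m k l
        + Zm y k m * lam i j m l + Zm y l m * lam i j k m) with hW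
    have hfp : -ε * L + Q - 4 * X + (1 / 2) * W = 0 := hfpl i j k l
    have hfun : (fun t : ℝ => betaLamM ε (fun p q r s => (1 + t) * lam p q r s)
          (fun m => (1 + t / 2) • y m) i j k l)
        = fun t : ℝ => (-ε * L + Q - 4 * X + (1 / 2) * W)
          + (-ε * L + 2 * Q - 8 * X + W) * t
          + (Q - 6 * X + (5 / 8) * W) * t ^ 2
          + (-2 * X + (1 / 8) * W) * t ^ 3
          + (-(1 / 4) * X) * t ^ 4 := by
      funext t
      have hQs : (∑ m, ∑ n, ((1 + t) * lam i j m n * ((1 + t) * lam m n k l)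
            + (1 + t) * lam i k m n * ((1 + t) * lam m n j l)
            + (1 + t) * lam i l m n * ((1 + t) * lam m n j k)))
          = (1 + t) ^ 2 * Q := by
        rw [hQ, Finset.mul_sum]
        refine Finset.sum_congr rfl fun m _ => ?_
        rw [Finset.mul_sum]
        exact Finset.sum_congr rfl fun n _ => by ring
      have hWs : (∑ m, (Zm (fun m' => (1 + t / 2) • y m') i m * ((1 + t) * lam m j k l)
            + Zm (fun m' => (1 + t / 2) • y m') j m * ((1 + t) * lam i m k l)
            + Zm (fun m' => (1 + t / 2) • y m') k m * ((1 + t) * lam i j m l)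
            + Zm (fun m' => (1 + t / 2) • y m') l m * ((1 + t) * lam i j k m)))
          = (1 + t / 2) ^ 2 * (1 + t) * W := by
        rw [hW, Finset.mul_sum]
        refine Finset.sum_congr rfl fun m _ => ?_
        rw [Zm_smul, Zm_smul, Zm_smul, Zm_smul]
        ring
      simp only [betaLamM, Xm_smul, hQs, hWs, ← hL, ← hX]
      ring
    rw [hfun, derivPoly]
    linarith [hfp]
  · intro i a b
    have h0 := hfpy i
    simp only [betaYM] at h0
    set S1 := ∑ j, (y j * y j * y i + y i * (y j * y j) + (4 : ℝ) • (y j * y i * y j))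
      with hS1
    set S2 := ∑ j, (Zm y i j • y j) with hS2
    have h0ab := congrFun (congrFun h0 a) b
    simp only [Matrix.add_apply, Matrix.smul_apply, Matrix.zero_apply, smul_eq_mul] at h0ab
    have hM : ∀ s : ℝ, betaYM ε (fun m => s • y m) i
        = (-(1 / 2) * ε * s) • y i + ((1 / 2) * s ^ 3) • S1 + ((1 / 2) * s ^ 3) • S2 := by
      intro s
      have h1 : (∑ j, ((s • y j) * (s • y j) * (s • y i) + (s • y i) * ((s • y j) * (s • y j))
            + (4 : ℝ) • ((s • y j) * (s • y i) * (s • y j)))) = s ^ 3 • S1 := by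
        rw [hS1, Finset.smul_sum]
        refine Finset.sum_congr rfl fun j _ => ?_
        simp only [smul_mul_assoc, mul_smul_comm, smul_smul, smul_add]
        module
      have h2 : (∑ j, (Zm (fun m => s • y m) i j • (s • y j))) = s ^ 3 • S2 := by
        rw [hS2, Finset.smul_sum]
        refine Finset.sum_congr rfl fun j _ => ?_
        rw [Zm_smul, smul_smul, smul_smul]
        congr 1
        ring
      simp only [betaYM]
      rw [h1, h2]
      simp only [smul_smul]
    have hfun : (fun t : ℝ => betaYM ε (fun m => (1 + t / 2) • y m) i a b)
        = fun t : ℝ => (-(1 / 2) * ε * y i a b + (1 / 2) * S1 a b + (1 / 2) * S2 a b)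
          + (-(1 / 4) * ε * y i a b + (3 / 4) * S1 a b + (3 / 4) * S2 a b) * t
          + ((3 / 8) * S1 a b + (3 / 8) * S2 a b) * t ^ 2
          + ((1 / 16) * S1 a b + (1 / 16) * S2 a b) * t ^ 3
          + (0 : ℝ) * t ^ 4 := by
      funext t
      rw [hM]
      simp only [Matrix.add_apply, Matrix.smul_apply, smul_eq_mul]
      ring
    rw [hfun, derivPoly]
    linarith [h0ab]
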